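/- arXiv:2312.11442 — 2 statements merged into one kernel-verified Lean document; each statement's English description precedes it below -/
import Mathlib

section
/- (Theorem 1, extrapolation beyond the behavior cloning policy). Let μ*, μ_RL, μ_BC be probability measures on trajectory space Ω (induced by the optimal policy under R*, the reinforcement-learned policy, and the behavior cloning policy, respectively), and set ε_ζ = ‖ζ_{μ*} − ζ_{μ_RL}‖_∞ (the ℓ∞ norm of the difference of expected discounted feature vectors). If J(μ*, R*) − J(μ_BC, R*) > ε_ζ + 2‖e‖_∞/(1 − γ), then J(μ_RL, R*) > J(μ_BC, R*). -/
open MeasureTheory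

/-- Expected discounted return `J(μ, R) = ∫_Ω Σ_{t=0}^{T−1} γ^t R(ω(t)) dμ(ω)`. -/
noncomputable def discReturn {S A : Type*} [MeasurableSpace S] [MeasurableSpace A]
    (T : ℕ) (γ : ℝ) (μ : Measure (Fin T → S × A)) (R : S × A → ℝ) : ℝ :=
  ∫ ω, ∑ t : Fin T, γ ^ (t : ℕ) * R (ω t) ∂μ

/-- Expected discounted feature vector `ζ_μ = ∫_Ω Σ_{t=0}^{T−1} γ^t ζ(ω(t)) dμ(ω) ∈ ℝ^n`. -/
noncomputable def discFeat {S A : Type*} [MeasurableSpace S] [MeasurableSpace A]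
    {n : ℕ} (T : ℕ) (γ : ℝ) (μ : Measure (Fin T → S × A))
    (ζ : S × A → Fin n → ℝ) : Fin n → ℝ :=
  ∫ ω, ∑ t : Fin T, γ ^ (t : ℕ) • ζ (ω t) ∂μ

lemma integrable_term {S A : Type*} [MeasurableSpace S] [MeasurableSpace A]
    {T : ℕ} (μ : Measure (Fin T → S × A)) [IsProbabilityMeasure μ]
    (g : S × A → ℝ) (hm : Measurable g) {C : ℝ} (hb : ∀ p, |g p| ≤ C)
    (t : Fin T) (c : ℝ) :
    Integrable (fun ω : Fin T → S × A => c * g (ω t)) μ := by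
  have hm1 : Measurable fun ω : Fin T → S × A => g (ω t) :=
    hm.comp (measurable_pi_apply t)
  refine ⟨(hm1.const_mul c).aestronglyMeasurable, ?_⟩
  apply HasFiniteIntegral.of_bounded (C := |c| * C)
  filter_upwards with ω
  rw [Real.norm_eq_abs, abs_mul]
  exact mul_le_mul_of_nonneg_left (hb _) (abs_nonneg c)

lemma integrable_sum {S A : Type*} [MeasurableSpace S] [MeasurableSpace A]
    {T : ℕ} (μ : Measure (Fin T → S × A)) [IsProbabilityMeasure μ]
    (g : S × A → ℝ) (hm : Measurable g) {C : ℝ} (hb : ∀ p, |g p| ≤ C) (γ : ℝ) :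
    Integrable (fun ω : Fin T → S × A => ∑ t : Fin T, γ ^ (t : ℕ) * g (ω t)) μ :=
  integrable_finset_sum _ fun t _ => integrable_term μ g hm hb t _

lemma integrable_feat {S A : Type*} [MeasurableSpace S] [MeasurableSpace A]
    {n T : ℕ} (μ : Measure (Fin T → S × A)) [IsProbabilityMeasure μ]
    (ζ : S × A → Fin n → ℝ) (hζm : Measurable ζ) {C : ℝ} (hb : ∀ p, ‖ζ p‖ ≤ C) (γ : ℝ) :
    Integrable (fun ω : Fin T → S × A => ∑ t : Fin T, γ ^ (t : ℕ) • ζ (ω t)) μ := by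
  refine integrable_finset_sum _ fun t _ => ?_
  have hm1 : Measurable fun ω : Fin T → S × A => ζ (ω t) :=
    hζm.comp (measurable_pi_apply t)
  refine ⟨(hm1.const_smul (γ ^ (t : ℕ))).aestronglyMeasurable, ?_⟩
  apply HasFiniteIntegral.of_bounded (C := |γ ^ (t : ℕ)| * C)
  filter_upwards with ω
  rw [norm_smul, Real.norm_eq_abs]
  exact mul_le_mul_of_nonneg_left (hb _) (abs_nonneg _)

/-- The return of the linear part of the reward equals `⟪w, ζ_μ⟫`. -/
lemma discReturn_linear {S A : Type*} [MeasurableSpace S] [MeasurableSpace A]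
    {n T : ℕ} (μ : Measure (Fin T → S × A)) [IsProbabilityMeasure μ]
    (ζ : S × A → Fin n → ℝ) (hζm : Measurable ζ) {C : ℝ} (hb : ∀ p, ‖ζ p‖ ≤ C)
    (w : Fin n → ℝ) (γ : ℝ) :
    discReturn T γ μ (fun p => ∑ i, w i * ζ p i) = ∑ i, w i * discFeat T γ μ ζ i := by
  have hInt := integrable_feat μ ζ hζm hb γ
  have happly : ∀ i, discFeat T γ μ ζ i
      = ∫ ω, ∑ t : Fin T, γ ^ (t : ℕ) * ζ (ω t) i ∂μ := by
    intro i
    have := (ContinuousLinearMap.proj (R := ℝ) (φ := fun _ : Fin n => ℝ) i).integral_comp_comm hInt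
    simpa [discFeat, smul_eq_mul] using this.symm
  have hζib : ∀ i p, |ζ p i| ≤ C := fun i p =>
    (norm_le_pi_norm (ζ p) i).trans (hb p)
  have hInt2 : ∀ i, Integrable
      (fun ω : Fin T → S × A => ∑ t : Fin T, γ ^ (t : ℕ) * ζ (ω t) i) μ := fun i =>
    integrable_sum μ (fun p => ζ p i) ((measurable_pi_apply i).comp hζm) (hζib i) γ
  calc discReturn T γ μ (fun p => ∑ i, w i * ζ p i)
      = ∫ ω, ∑ i, w i * ∑ t : Fin T, γ ^ (t : ℕ) * ζ (ω t) i ∂μ := by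
        unfold discReturn
        congr 1
        funext ω
        simp only [Finset.mul_sum]
        rw [Finset.sum_comm]
        exact Finset.sum_congr rfl fun i _ => Finset.sum_congr rfl fun t _ => by ring
    _ = ∑ i, w i * ∫ ω, ∑ t : Fin T, γ ^ (t : ℕ) * ζ (ω t) i ∂μ := by
        rw [integral_finset_sum _ fun i _ => (hInt2 i).const_mul (w i)]
        exact Finset.sum_congr rfl fun i _ => integral_const_mul _ _
    _ = ∑ i, w i * discFeat T γ μ ζ i := by
        exact Finset.sum_congr rfl fun i _ => by rw [happly i]

/-- Bound on the error contribution to the return. -/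
lemma discReturn_err_bound {S A : Type*} [MeasurableSpace S] [MeasurableSpace A]
    {T : ℕ} (μ : Measure (Fin T → S × A)) [IsProbabilityMeasure μ]
    (e : S × A → ℝ) {E : ℝ} (hE : 0 ≤ E) (hb : ∀ p, |e p| ≤ E)
    {γ : ℝ} (hγ0 : 0 < γ) (hγ1 : γ < 1) (hem : Measurable e) :
    |discReturn T γ μ e| ≤ E / (1 - γ) := by
  have hbd : ∀ ω : Fin T → S × A,
      ‖∑ t : Fin T, γ ^ (t : ℕ) * e (ω t)‖ ≤ E / (1 - γ) := by
    intro ω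
    calc ‖∑ t : Fin T, γ ^ (t : ℕ) * e (ω t)‖
        ≤ ∑ t : Fin T, ‖γ ^ (t : ℕ) * e (ω t)‖ := norm_sum_le _ _
      _ ≤ ∑ t : Fin T, γ ^ (t : ℕ) * E := by
          refine Finset.sum_le_sum fun t _ => ?_
          rw [Real.norm_eq_abs, abs_mul, abs_of_nonneg (pow_nonneg hγ0.le _)]
          exact mul_le_mul_of_nonneg_left (hb _) (pow_nonneg hγ0.le _)
      _ = (∑ t ∈ Finset.range T, γ ^ t) * E := by
          rw [Finset.sum_mul, Fin.sum_univ_eq_sum_range (fun t => γ ^ t * E)]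
      _ ≤ (1 - γ)⁻¹ * E := by
          refine mul_le_mul_of_nonneg_right ?_ hE
          calc ∑ t ∈ Finset.range T, γ ^ t
              ≤ ∑' t : ℕ, γ ^ t :=
                Summable.sum_le_tsum _ (fun i _ => pow_nonneg hγ0.le i)
                  (summable_geometric_of_lt_one hγ0.le hγ1)
            _ = (1 - γ)⁻¹ := tsum_geometric_of_lt_one hγ0.le hγ1
      _ = E / (1 - γ) := by rw [div_eq_inv_mul]
  have := norm_integral_le_of_norm_le_const (μ := μ)
    (f := fun ω : Fin T → S × A => ∑ t : Fin T, γ ^ (t : ℕ) * e (ω t))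
    (C := E / (1 - γ)) (Filter.Eventually.of_forall hbd)
  simpa [discReturn, Real.norm_eq_abs] using this

/-- Theorem 1: extrapolation beyond the behavior cloning policy.  If the optimality gap
`J(μ*, R*) − J(μ_BC, R*)` exceeds `ε_ζ + 2‖e‖_∞/(1 − γ)`, where
`ε_ζ = ‖ζ_{μ*} − ζ_{μ_RL}‖_∞`, then `J(μ_RL, R*) > J(μ_BC, R*)`. -/
theorem extrapolation_beyond_BC
    {S A : Type*} [MeasurableSpace S] [MeasurableSpace A]
    {n T : ℕ} (hT : 1 ≤ T) {γ : ℝ} (hγ0 : 0 < γ) (hγ1 : γ < 1)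
    (ζ : S × A → Fin n → ℝ) (hζm : Measurable ζ)
    (hζb : ∃ C, ∀ p, ‖ζ p‖ ≤ C)
    (w : Fin n → ℝ) (hw : ∑ i, |w i| ≤ 1)
    (e : S × A → ℝ) (hem : Measurable e) (heb : ∃ C, ∀ p, |e p| ≤ C)
    (μstar μRL μBC : Measure (Fin T → S × A))
    [IsProbabilityMeasure μstar] [IsProbabilityMeasure μRL] [IsProbabilityMeasure μBC]
    (Rstar : S × A → ℝ)
    (hR : Rstar = fun p => (∑ i, w i * ζ p i) + e p)
    (hgap : discReturn T γ μstar Rstar - discReturn T γ μBC Rstar >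
      (⨆ i, |discFeat T γ μstar ζ i - discFeat T γ μRL ζ i|) +
        2 * (⨆ p, |e p|) / (1 - γ)) :
    discReturn T γ μRL Rstar > discReturn T γ μBC Rstar := by
  obtain ⟨Cζ, hζb⟩ := hζb
  obtain ⟨Ce, heb⟩ := heb
  -- the state-action space is nonempty
  have hΩ : Nonempty (Fin T → S × A) := by
    by_contra h
    have h1 : μstar Set.univ = 1 := measure_univ
    rw [Set.univ_eq_empty_iff.mpr (not_nonempty_iff.mp h), measure_empty] at h1
    exact zero_ne_one h1
  have hSA : Nonempty (S × A) := ⟨hΩ.some ⟨0, hT⟩⟩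
  -- the sup norms
  set E := ⨆ p, |e p| with hEdef
  have hbdd : BddAbove (Set.range fun p => |e p|) :=
    ⟨Ce, by rintro _ ⟨p, rfl⟩; exact heb p⟩
  have hEub : ∀ p, |e p| ≤ E := fun p => le_ciSup hbdd p
  have hE0 : 0 ≤ E := le_trans (abs_nonneg _) (hEub (Classical.arbitrary _))
  set ε := ⨆ i, |discFeat T γ μstar ζ i - discFeat T γ μRL ζ i| with hεdef
  have hε0 : 0 ≤ ε := Real.iSup_nonneg fun i => abs_nonneg _
  have hεub : ∀ i, |discFeat T γ μstar ζ i - discFeat T γ μRL ζ i| ≤ ε := fun i =>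
    le_ciSup (f := fun i => |discFeat T γ μstar ζ i - discFeat T γ μRL ζ i|)
      (Set.Finite.bddAbove (Set.finite_range _)) i
  -- boundedness/measurability of the linear part
  have hζib : ∀ p i, |ζ p i| ≤ Cζ := fun p i => (norm_le_pi_norm (ζ p) i).trans (hζb p)
  have hlinm : Measurable fun p : S × A => ∑ i, w i * ζ p i :=
    Finset.measurable_sum _ fun i _ => ((measurable_pi_apply i).comp hζm).const_mul (w i)
  have hlinb : ∀ p, |∑ i, w i * ζ p i| ≤ ∑ i, |w i| * Cζ := fun p =>
    (Finset.abs_sum_le_sum_abs _ _).trans <| Finset.sum_le_sum fun i _ => by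
      rw [abs_mul]; exact mul_le_mul_of_nonneg_left (hζib p i) (abs_nonneg _)
  -- split the return
  have hsplit : ∀ (μ : Measure (Fin T → S × A)) [IsProbabilityMeasure μ],
      discReturn T γ μ Rstar
        = (∑ i, w i * discFeat T γ μ ζ i) + discReturn T γ μ e := by
    intro μ _
    have h1 : discReturn T γ μ Rstar
        = discReturn T γ μ (fun p => ∑ i, w i * ζ p i) + discReturn T γ μ e := by
      unfold discReturn
      rw [← integral_add (integrable_sum μ _ hlinm hlinb γ)
        (integrable_sum μ e hem heb γ)]
      congr 1
      funext ω
      rw [← Finset.sum_add_distrib]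
      exact Finset.sum_congr rfl fun t _ => by rw [hR]; ring
    rw [h1, discReturn_linear μ ζ hζm hζb w γ]
  rw [hsplit μstar, hsplit μRL, hsplit μBC] at *
  -- bound the feature-difference term
  have hfdiff : (∑ i, w i * discFeat T γ μstar ζ i)
      - (∑ i, w i * discFeat T γ μRL ζ i) ≤ ε := by
    rw [← Finset.sum_sub_distrib]
    calc ∑ i, (w i * discFeat T γ μstar ζ i - w i * discFeat T γ μRL ζ i)
        ≤ |∑ i, (w i * discFeat T γ μstar ζ i - w i * discFeat T γ μRL ζ i)| :=
          le_abs_self _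
      _ ≤ ∑ i, |w i * discFeat T γ μstar ζ i - w i * discFeat T γ μRL ζ i| :=
          Finset.abs_sum_le_sum_abs _ _
      _ ≤ ∑ i, |w i| * ε := by
          refine Finset.sum_le_sum fun i _ => ?_
          rw [← mul_sub, abs_mul]
          exact mul_le_mul_of_nonneg_left (hεub i) (abs_nonneg _)
      _ = (∑ i, |w i|) * ε := (Finset.sum_mul _ _ _).symm
      _ ≤ 1 * ε := mul_le_mul_of_nonneg_right hw hε0
      _ = ε := one_mul ε
  -- bound the error terms
  have he1 := discReturn_err_bound μstar e hE0 hEub hγ0 hγ1 hem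
  have he2 := discReturn_err_bound μRL e hE0 hEub hγ0 hγ1 hem
  have h1 := abs_le.mp he1
  have h2 := abs_le.mp he2
  have hdiv : 2 * E / (1 - γ) = E / (1 - γ) + E / (1 - γ) := by ring
  linarith [hgap, hfdiff, h1.1, h1.2, h2.1, h2.2]
end

section
/- (Performance-gap bound, main inequality in the proof of Theorem 1). For any two probability measures μ₁, μ₂ on trajectory space Ω, J(μ₁, R*) − J(μ₂, R*) ≤ ‖w‖₁ · ‖ζ_{μ₁} − ζ_{μ₂}‖_∞ + 2‖e‖_∞/(1 − γ). In particular, under the standing assumption ‖w‖₁ ≤ 1, J(μ₁, R*) − J(μ₂, R*) ≤ ‖ζ_{μ₁} − ζ_{μ₂}‖_∞ + 2‖e‖_∞/(1 − γ). -/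
open MeasureTheory

section Aux

variable {X : Type*} [MeasurableSpace X] {T : ℕ} {γ : ℝ}

/-- Integrability of a bounded-coordinate discounted sum. -/
lemma integ_discSum (μ : Measure (Fin T → X)) [IsProbabilityMeasure μ]
    (f : X → ℝ) (hf : Measurable f) {C : ℝ} (hC : ∀ p, |f p| ≤ C) :
    Integrable (fun ω : Fin T → X => ∑ t : Fin T, γ ^ (t : ℕ) * f (ω t)) μ := by
  have hm : Measurable fun ω : Fin T → X => ∑ t : Fin T, γ ^ (t : ℕ) * f (ω t) :=
    Finset.measurable_sum _ fun t _ => (hf.comp (measurable_pi_apply t)).const_mul _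
  refine ⟨hm.aestronglyMeasurable, ?_⟩
  apply HasFiniteIntegral.of_bounded (C := ∑ t : Fin T, |γ| ^ (t : ℕ) * C)
  filter_upwards with ω
  calc ‖∑ t : Fin T, γ ^ (t : ℕ) * f (ω t)‖
      ≤ ∑ t : Fin T, ‖γ ^ (t : ℕ) * f (ω t)‖ := norm_sum_le _ _
    _ ≤ ∑ t : Fin T, |γ| ^ (t : ℕ) * C := by
        refine Finset.sum_le_sum fun t _ => ?_
        rw [Real.norm_eq_abs, abs_mul, abs_pow]
        exact mul_le_mul_of_nonneg_left (hC _) (by positivity)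

lemma geom_sum_le_inv (hγ0 : 0 ≤ γ) (hγ1 : γ < 1) :
    ∑ t : Fin T, γ ^ (t : ℕ) ≤ 1 / (1 - γ) := by
  have h1γ : 0 < 1 - γ := by linarith
  rw [Fin.sum_univ_eq_sum_range, geom_sum_eq (by linarith : γ ≠ 1)]
  have : (γ ^ T - 1) / (γ - 1) = (1 - γ ^ T) / (1 - γ) := by
    rw [← neg_div_neg_eq]; ring_nf
  rw [this]
  exact div_le_div₀ zero_le_one (by nlinarith [pow_nonneg (le_trans hγ0 (le_refl γ)) T]) h1γ le_rfl

/-- Bound on the discounted integral of a bounded function. -/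
lemma abs_integral_discSum_le (μ : Measure (Fin T → X)) [IsProbabilityMeasure μ]
    (hγ0 : 0 ≤ γ) (hγ1 : γ < 1)
    (f : X → ℝ) (hf : Measurable f) {C : ℝ} (hC : ∀ p, |f p| ≤ C) (hC0 : 0 ≤ C) :
    |∫ ω, ∑ t : Fin T, γ ^ (t : ℕ) * f (ω t) ∂μ| ≤ C / (1 - γ) := by
  have h1γ : 0 < 1 - γ := by linarith
  have hb : ∀ᵐ ω ∂μ, ‖∑ t : Fin T, γ ^ (t : ℕ) * f (ω t)‖ ≤ C / (1 - γ) := by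
    filter_upwards with ω
    calc ‖∑ t : Fin T, γ ^ (t : ℕ) * f (ω t)‖
        ≤ ∑ t : Fin T, ‖γ ^ (t : ℕ) * f (ω t)‖ := norm_sum_le _ _
      _ ≤ ∑ t : Fin T, γ ^ (t : ℕ) * C := by
          refine Finset.sum_le_sum fun t _ => ?_
          rw [Real.norm_eq_abs, abs_mul, abs_pow, abs_of_nonneg hγ0]
          exact mul_le_mul_of_nonneg_left (hC _) (by positivity)
      _ = (∑ t : Fin T, γ ^ (t : ℕ)) * C := by rw [Finset.sum_mul]
      _ ≤ (1 / (1 - γ)) * C :=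
          mul_le_mul_of_nonneg_right (geom_sum_le_inv hγ0 hγ1) hC0
      _ = C / (1 - γ) := by ring
  have := norm_integral_le_of_norm_le_const (μ := μ) hb
  simpa using this

end Aux

/-- Performance-gap bound: for any two probability measures `μ₁, μ₂` on trajectory space,
`J(μ₁, R*) − J(μ₂, R*) ≤ ‖w‖₁ ⬝ ‖ζ_{μ₁} − ζ_{μ₂}‖_∞ + 2‖e‖_∞/(1 − γ)`, and in particular,
since `‖w‖₁ ≤ 1`, `J(μ₁, R*) − J(μ₂, R*) ≤ ‖ζ_{μ₁} − ζ_{μ₂}‖_∞ + 2‖e‖_∞/(1 − γ)`. -/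
theorem performance_gap_bound
    {S A : Type*} [MeasurableSpace S] [MeasurableSpace A]
    {n T : ℕ} (hT : 1 ≤ T) {γ : ℝ} (hγ0 : 0 < γ) (hγ1 : γ < 1)
    (ζ : S × A → Fin n → ℝ) (hζm : Measurable ζ)
    (hζb : ∃ C, ∀ p, ‖ζ p‖ ≤ C)
    (w : Fin n → ℝ) (hw : ∑ i, |w i| ≤ 1)
    (e : S × A → ℝ) (hem : Measurable e) (heb : ∃ C, ∀ p, |e p| ≤ C)
    (μ₁ μ₂ : Measure (Fin T → S × A))
    [IsProbabilityMeasure μ₁] [IsProbabilityMeasure μ₂]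
    (Rstar : S × A → ℝ)
    (hR : Rstar = fun p => (∑ i, w i * ζ p i) + e p) :
    discReturn T γ μ₁ Rstar - discReturn T γ μ₂ Rstar ≤
      (∑ i, |w i|) * (⨆ i, |discFeat T γ μ₁ ζ i - discFeat T γ μ₂ ζ i|) +
        2 * (⨆ p, |e p|) / (1 - γ) ∧
    discReturn T γ μ₁ Rstar - discReturn T γ μ₂ Rstar ≤
      (⨆ i, |discFeat T γ μ₁ ζ i - discFeat T γ μ₂ ζ i|) +
        2 * (⨆ p, |e p|) / (1 - γ) := by
  obtain ⟨Cζ, hCζ⟩ := hζb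
  have h1γ : 0 < 1 - γ := by linarith
  -- nonemptiness of S × A
  have hne : Nonempty (S × A) := by
    have h1 : (μ₁ Set.univ : ENNReal) ≠ 0 := by simp
    obtain ⟨ω, -⟩ := nonempty_of_measure_ne_zero h1
    exact ⟨ω ⟨0, hT⟩⟩
  -- sup of |e|
  set E := ⨆ p, |e p| with hE
  have hEbdd : BddAbove (Set.range fun p => |e p|) := by
    obtain ⟨C, hC⟩ := heb
    exact ⟨C, by rintro x ⟨p, rfl⟩; exact hC p⟩
  have hEle : ∀ p, |e p| ≤ E := fun p => le_ciSup hEbdd p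
  have hE0 : 0 ≤ E := le_trans (abs_nonneg _) (hEle (Classical.arbitrary _))
  -- sup of |Δ|
  set D := fun i => discFeat T γ μ₁ ζ i - discFeat T γ μ₂ ζ i with hD
  set M := ⨆ i, |D i| with hM
  have hDle : ∀ i, |D i| ≤ M := fun i => le_ciSup (f := fun i => |D i|) (Set.Finite.bddAbove (Set.finite_range _)) i
  have hM0 : 0 ≤ M := Real.iSup_nonneg fun i => abs_nonneg _
  -- coordinate bounds for ζ
  have hζc : ∀ (i : Fin n) p, |ζ p i| ≤ Cζ := by
    intro i p
    have h := norm_le_pi_norm (ζ p) i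
    rw [Real.norm_eq_abs] at h
    exact h.trans (hCζ p)
  have hζcm : ∀ i : Fin n, Measurable fun p => ζ p i := fun i =>
    (measurable_pi_apply i).comp hζm
  -- integrability facts
  have hIg : ∀ (μ : Measure (Fin T → S × A)) [IsProbabilityMeasure μ] (i : Fin n),
      Integrable (fun ω : Fin T → S × A => ∑ t : Fin T, γ ^ (t : ℕ) * ζ (ω t) i) μ :=
    fun μ _ i => integ_discSum μ _ (hζcm i) (hζc i)
  have hIe : ∀ (μ : Measure (Fin T → S × A)) [IsProbabilityMeasure μ],
      Integrable (fun ω : Fin T → S × A => ∑ t : Fin T, γ ^ (t : ℕ) * e (ω t)) μ :=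
    fun μ _ => integ_discSum μ _ hem hEle
  -- integrability of the vector-valued feature function
  have hIv : ∀ (μ : Measure (Fin T → S × A)) [IsProbabilityMeasure μ],
      Integrable (fun ω : Fin T → S × A => ∑ t : Fin T, γ ^ (t : ℕ) • ζ (ω t)) μ := by
    intro μ _
    have hm : Measurable fun ω : Fin T → S × A => ∑ t : Fin T, γ ^ (t : ℕ) • ζ (ω t) :=
      Finset.measurable_sum _ fun t _ => by fun_prop
    refine ⟨hm.aestronglyMeasurable, ?_⟩
    apply HasFiniteIntegral.of_bounded (C := ∑ t : Fin T, |γ| ^ (t : ℕ) * Cζ)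
    filter_upwards with ω
    calc ‖∑ t : Fin T, γ ^ (t : ℕ) • ζ (ω t)‖
        ≤ ∑ t : Fin T, ‖γ ^ (t : ℕ) • ζ (ω t)‖ := norm_sum_le _ _
      _ ≤ ∑ t : Fin T, |γ| ^ (t : ℕ) * Cζ := by
          refine Finset.sum_le_sum fun t _ => ?_
          rw [norm_smul, Real.norm_eq_abs, abs_pow]
          exact mul_le_mul_of_nonneg_left (hCζ _) (by positivity)
  -- discFeat coordinates
  have hFeat : ∀ (μ : Measure (Fin T → S × A)) [IsProbabilityMeasure μ] (i : Fin n),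
      discFeat T γ μ ζ i = ∫ ω, ∑ t : Fin T, γ ^ (t : ℕ) * ζ (ω t) i ∂μ := by
    intro μ _ i
    have := (ContinuousLinearMap.integral_comp_comm
      (ContinuousLinearMap.proj (R := ℝ) (φ := fun _ : Fin n => ℝ) i) (hIv μ))
    simp only [ContinuousLinearMap.proj_apply] at this
    rw [discFeat, ← this]
    congr 1; funext ω
    simp [Finset.sum_apply, smul_eq_mul]
  -- decompose discReturn
  have hRet : ∀ (μ : Measure (Fin T → S × A)) [IsProbabilityMeasure μ],
      discReturn T γ μ Rstar =
        (∑ i, w i * discFeat T γ μ ζ i) +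
          ∫ ω, ∑ t : Fin T, γ ^ (t : ℕ) * e (ω t) ∂μ := by
    intro μ _
    have hsplit : (fun ω : Fin T → S × A => ∑ t : Fin T, γ ^ (t : ℕ) * Rstar (ω t)) =
        fun ω => (∑ i, w i * ∑ t : Fin T, γ ^ (t : ℕ) * ζ (ω t) i) +
          ∑ t : Fin T, γ ^ (t : ℕ) * e (ω t) := by
      funext ω
      rw [hR]
      simp only [mul_add]
      rw [Finset.sum_add_distrib]
      congr 1
      simp only [Finset.mul_sum]
      rw [Finset.sum_comm]
      exact Finset.sum_congr rfl fun i _ => Finset.sum_congr rfl fun t _ => by ring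
    rw [discReturn, hsplit, integral_add (by
        exact integrable_finset_sum _ fun i _ => ((hIg μ i).const_mul (w i))) (hIe μ)]
    rw [integral_finset_sum _ fun i _ => (hIg μ i).const_mul (w i)]
    congr 1
    refine Finset.sum_congr rfl fun i _ => ?_
    rw [integral_const_mul, hFeat μ i]
  -- abbreviate error integrals
  set I₁ := ∫ ω, ∑ t : Fin T, γ ^ (t : ℕ) * e (ω t) ∂μ₁ with hI₁
  set I₂ := ∫ ω, ∑ t : Fin T, γ ^ (t : ℕ) * e (ω t) ∂μ₂ with hI₂
  have hI₁b : |I₁| ≤ E / (1 - γ) :=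
    abs_integral_discSum_le μ₁ hγ0.le hγ1 e hem hEle hE0
  have hI₂b : |I₂| ≤ E / (1 - γ) :=
    abs_integral_discSum_le μ₂ hγ0.le hγ1 e hem hEle hE0
  have hdiff : discReturn T γ μ₁ Rstar - discReturn T γ μ₂ Rstar =
      (∑ i, w i * D i) + (I₁ - I₂) := by
    rw [hRet μ₁, hRet μ₂, hD]
    simp only [mul_sub]
    rw [Finset.sum_sub_distrib]
    ring
  have hlin : (∑ i, w i * D i) ≤ (∑ i, |w i|) * M := by
    calc (∑ i, w i * D i) ≤ ∑ i, |w i| * M := by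
          refine Finset.sum_le_sum fun i _ => ?_
          calc w i * D i ≤ |w i * D i| := le_abs_self _
            _ = |w i| * |D i| := abs_mul _ _
            _ ≤ |w i| * M := mul_le_mul_of_nonneg_left (hDle i) (abs_nonneg _)
      _ = (∑ i, |w i|) * M := by rw [Finset.sum_mul]
  have herr : I₁ - I₂ ≤ 2 * E / (1 - γ) := by
    have : I₁ - I₂ ≤ |I₁| + |I₂| := by
      have := abs_sub_abs_le_abs_sub I₁ I₂
      calc I₁ - I₂ ≤ |I₁ - I₂| := le_abs_self _
        _ ≤ |I₁| + |I₂| := abs_sub _ _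
    calc I₁ - I₂ ≤ |I₁| + |I₂| := this
      _ ≤ E / (1 - γ) + E / (1 - γ) := add_le_add hI₁b hI₂b
      _ = 2 * E / (1 - γ) := by ring
  constructor
  · rw [hdiff]; exact add_le_add hlin herr
  · rw [hdiff]
    refine add_le_add (hlin.trans ?_) herr
    calc (∑ i, |w i|) * M ≤ 1 * M := mul_le_mul_of_nonneg_right hw hM0
      _ = M := one_mul M
end
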